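/- arXiv:0905.2858 — 6 statements merged into one kernel-verified Lean document; each statement's English description precedes it below -/
import Mathlib

section
/- Let ν be a Borel measure on ℝⁿ such that ν(A) < ∞ for every Borel set A whose closure does not contain 0. Let (μ_k)_{k∈ℕ} be finite Borel measures on ℝⁿ and (t_k)_{k∈ℕ} positive reals with t_k → 0, and suppose that (1/t_k)∫_{ℝⁿ} f dμ_k → ∫_{ℝⁿ} f dν as k → ∞ for every bounded continuous function f : ℝⁿ → ℝ which vanishes on some neighborhood of 0. Then for every half-open box (α,β] = {v ∈ ℝⁿ : αᵢ < vᵢ ≤ βᵢ for i = 1,…,n} with 0 ∉ [α,β] and ν(∂(α,β]) = 0, one has (1/t_k) μ_k((α,β]) → ν((α,β]) as k → ∞. -/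
/-!
Squeeze the indicator of the box `B` between two Urysohn functions that vanish near `0`, so
that the hypothesis applies to both. From above, use a function equal to `1` on `closure B` and
supported in a thin thickening of it: its `ν`-integral is close to `ν (closure B)`. From below,
use a function supported in `interior B` and equal to `1` on a large closed subset of it: its
`ν`-integral is close to `ν (interior B)`. A `ν`-null frontier makes both limits `ν B`.
-/

open MeasureTheory Filter Topology Metric Set

lemma measureReal_le_integral_le_measureReal {Ω : Type*} [MeasurableSpace Ω] {μ : Measure Ω}
    {s t : Set Ω} {g : Ω → ℝ} (hs : MeasurableSet s) (ht : MeasurableSet t) (hμt : μ t ≠ ⊤)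
    (hg : AEStronglyMeasurable g μ) (hsg : s.indicator 1 ≤ g) (hgt : g ≤ t.indicator 1) :
    μ.real s ≤ ∫ x, g x ∂μ ∧ ∫ x, g x ∂μ ≤ μ.real t := by
  have hg0 : 0 ≤ g := fun x => (indicator_nonneg (fun _ _ => zero_le_one) x).trans (hsg x)
  have ht_int : Integrable (t.indicator 1) μ :=
    (integrable_indicator_iff ht).2 (integrableOn_const (C := (1 : ℝ)) hμt)
  have hg_int : Integrable g μ :=
    ht_int.mono' hg (Eventually.of_forall fun x => by
      rw [Real.norm_eq_abs, abs_of_nonneg (hg0 x)]; exact hgt x)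
  constructor
  · rw [← integral_indicator_one hs]
    exact integral_mono_of_nonneg (Eventually.of_forall fun x =>
      indicator_nonneg (fun _ _ => zero_le_one) x) hg_int (Eventually.of_forall hsg)
  · rw [← integral_indicator_one ht]
    exact integral_mono_of_nonneg (Eventually.of_forall hg0) ht_int (Eventually.of_forall hgt)

variable {X : Type*} [PseudoEMetricSpace X]

def IsBoundedContinuousVanishingNear (x₀ : X) (f : X → ℝ) : Prop :=
  Continuous f ∧ (∃ C : ℝ, ∀ x, |f x| ≤ C) ∧ ∃ s ∈ 𝓝 x₀, ∀ x ∈ s, f x = 0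

lemma exists_pos_notMem_closure_thickening {x₀ : X} {s : Set X} (h : x₀ ∉ closure s) :
    ∃ δ > 0, x₀ ∉ closure (thickening δ s) := by
  rw [closure_eq_iInter_cthickening] at h
  simp only [mem_iInter, not_forall] at h
  obtain ⟨δ, hδ, hx₀⟩ := h
  exact ⟨δ, hδ, fun hx => hx₀ (closure_thickening_subset_cthickening δ s hx)⟩

lemma exists_isBoundedContinuousVanishingNear_indicator_le_le_indicator {x₀ : X} {F V : Set X}
    (hF : IsClosed F) (hV : IsOpen V) (hFV : F ⊆ V) (hx₀ : x₀ ∉ closure V) :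
    ∃ g : X → ℝ, IsBoundedContinuousVanishingNear x₀ g ∧ F.indicator 1 ≤ g ∧
      g ≤ V.indicator 1 := by
  obtain ⟨g, hg0, hg1, hg01⟩ := exists_continuous_zero_one_of_isClosed hV.isClosed_compl hF
    (disjoint_compl_left_iff_subset.2 hFV)
  have hvanish : ∀ x ∉ V, g x = 0 := fun x hx => hg0 hx
  refine ⟨g, ⟨g.continuous, ⟨1, fun x => abs_le.2 ⟨by linarith [(hg01 x).1], (hg01 x).2⟩⟩,
    (closure V)ᶜ, isClosed_closure.isOpen_compl.mem_nhds hx₀,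
    fun x hx => hvanish x fun hxV => hx (subset_closure hxV)⟩, fun x => ?_, fun x => ?_⟩
  · by_cases hx : x ∈ F
    · simp [hx, hg1 hx]
    · simpa [hx] using (hg01 x).1
  · by_cases hx : x ∈ V
    · simpa [hx] using (hg01 x).2
    · simp [hx, hvanish x hx]

section Convergence

variable [MeasurableSpace X] [OpensMeasurableSpace X] {ν : Measure X} {μ : ℕ → Measure X}
  [∀ k, IsFiniteMeasure (μ k)] {t : ℕ → ℝ} {x₀ : X} {s : Set X}

lemma eventually_mul_measureReal_lt (ht : ∀ k, 0 ≤ t k)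
    (hν : ∀ A : Set X, MeasurableSet A → x₀ ∉ closure A → ν A < ⊤)
    (hconv : ∀ f, IsBoundedContinuousVanishingNear x₀ f →
      Tendsto (fun k => (1 / t k) * ∫ x, f x ∂(μ k)) atTop (𝓝 (∫ x, f x ∂ν)))
    (hs : MeasurableSet s) (hx₀ : x₀ ∉ closure s) {c : ℝ} (hc : ν.real (closure s) < c) :
    ∀ᶠ k in atTop, (1 / t k) * (μ k).real s < c := by
  obtain ⟨R, hR, hx₀R⟩ := exists_pos_notMem_closure_thickening hx₀
  have hνR : ν (thickening R s) ≠ ⊤ := (hν _ isOpen_thickening.measurableSet hx₀R).ne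
  have hc' : ν (closure s) < ENNReal.ofReal c := (ENNReal.lt_ofReal_iff_toReal_lt
    (ne_top_of_le_ne_top hνR (measure_mono (closure_subset_thickening hR s)))).2 hc
  have hthick := tendsto_measure_thickening ⟨R, hR, hνR⟩
  obtain ⟨δ, hδν, hδ, hδR⟩ := (hthick.eventually_lt_const hc' |>.and (Ioo_mem_nhdsGT hR)).exists
  have hsub : thickening δ s ⊆ thickening R s := thickening_mono hδR.le s
  have hνδ : ν (thickening δ s) ≠ ⊤ := ne_top_of_le_ne_top hνR (measure_mono hsub)
  obtain ⟨g, hg, hsg, hgV⟩ := exists_isBoundedContinuousVanishingNear_indicator_le_le_indicator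
    isClosed_closure isOpen_thickening (closure_subset_thickening hδ s)
    fun h => hx₀R (closure_mono hsub h)
  have hBg : s.indicator 1 ≤ g := (indicator_le_indicator_of_subset subset_closure
    fun _ => zero_le_one).trans hsg
  have hgν : ∫ x, g x ∂ν < c :=
    (measureReal_le_integral_le_measureReal isClosed_closure.measurableSet
      isOpen_thickening.measurableSet hνδ hg.1.aestronglyMeasurable hsg hgV).2.trans_lt
      (ENNReal.toReal_lt_of_lt_ofReal hδν)
  filter_upwards [(hconv g hg).eventually_lt_const hgν] with k hk
  refine lt_of_le_of_lt (mul_le_mul_of_nonneg_left ?_ (one_div_nonneg.2 (ht k))) hk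
  exact (measureReal_le_integral_le_measureReal hs isOpen_thickening.measurableSet
    (measure_ne_top _ _) hg.1.aestronglyMeasurable hBg hgV).1

lemma eventually_lt_mul_measureReal (ht : ∀ k, 0 ≤ t k)
    (hconv : ∀ f, IsBoundedContinuousVanishingNear x₀ f →
      Tendsto (fun k => (1 / t k) * ∫ x, f x ∂(μ k)) atTop (𝓝 (∫ x, f x ∂ν)))
    (hs : MeasurableSet s) (hx₀ : x₀ ∉ closure s) (hνs : ν s ≠ ⊤) {c : ℝ}
    (hc : c < ν.real (interior s)) :
    ∀ᶠ k in atTop, c < (1 / t k) * (μ k).real s := by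
  obtain ⟨F, hF_closed, hF_sub, hF_union, hF_mono⟩ :=
    (isOpen_interior (s := s)).exists_iUnion_isClosed
  have hνF : Tendsto (fun n => ν.real (F n)) atTop (𝓝 (ν.real (interior s))) := by
    have h := tendsto_measure_iUnion_atTop (μ := ν) hF_mono
    rw [hF_union] at h
    exact (ENNReal.tendsto_toReal
      (ne_top_of_le_ne_top hνs (measure_mono interior_subset))).comp h
  obtain ⟨n, hn⟩ := (hνF.eventually_const_lt hc).exists
  obtain ⟨g, hg, hFg, hgU⟩ := exists_isBoundedContinuousVanishingNear_indicator_le_le_indicator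
    (hF_closed n) isOpen_interior (hF_sub n) fun h => hx₀ (closure_mono interior_subset h)
  have hgB : g ≤ s.indicator 1 :=
    hgU.trans (indicator_le_indicator_of_subset interior_subset fun _ => zero_le_one)
  have hgν : c < ∫ x, g x ∂ν := hn.trans_le (measureReal_le_integral_le_measureReal
    (hF_closed n).measurableSet hs hνs hg.1.aestronglyMeasurable hFg hgB).1
  filter_upwards [(hconv g hg).eventually_const_lt hgν] with k hk
  refine hk.trans_le (mul_le_mul_of_nonneg_left ?_ (one_div_nonneg.2 (ht k)))
  exact (measureReal_le_integral_le_measureReal (hF_closed n).measurableSet hs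
    (measure_ne_top _ _) hg.1.aestronglyMeasurable hFg hgB).2

theorem tendsto_mul_measureReal_of_null_frontier (ht : ∀ k, 0 ≤ t k)
    (hν : ∀ A : Set X, MeasurableSet A → x₀ ∉ closure A → ν A < ⊤)
    (hconv : ∀ f, IsBoundedContinuousVanishingNear x₀ f →
      Tendsto (fun k => (1 / t k) * ∫ x, f x ∂(μ k)) atTop (𝓝 (∫ x, f x ∂ν)))
    (hs : MeasurableSet s) (hx₀ : x₀ ∉ closure s) (hfr : ν (frontier s) = 0) :
    Tendsto (fun k => (1 / t k) * (μ k).real s) atTop (𝓝 (ν.real s)) := by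
  refine tendsto_order.2 ⟨fun c hc => ?_, fun c hc => ?_⟩
  · refine eventually_lt_mul_measureReal ht hconv hs hx₀ (hν s hs hx₀).ne ?_
    rwa [measureReal_def, measure_interior_of_null_frontier hfr]
  · refine eventually_mul_measureReal_lt ht hν hconv hs hx₀ ?_
    rwa [measureReal_def, measure_closure_of_null_frontier hfr]

end Convergence

theorem tendsto_measure_box_of_tendsto_integral_general {n : ℕ}
    (ν : Measure (Fin n → ℝ))
    (hν : ∀ A : Set (Fin n → ℝ), MeasurableSet A → (0 : Fin n → ℝ) ∉ closure A → ν A < ⊤)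
    (μ : ℕ → Measure (Fin n → ℝ)) (hμ : ∀ k, IsFiniteMeasure (μ k))
    (t : ℕ → ℝ) (ht : ∀ k, 0 < t k)
    (hconv : ∀ f : (Fin n → ℝ) → ℝ, Continuous f → (∃ C : ℝ, ∀ x, |f x| ≤ C) →
      (∃ s ∈ nhds (0 : Fin n → ℝ), ∀ x ∈ s, f x = 0) →
      Tendsto (fun k => (1 / t k) * ∫ x, f x ∂(μ k)) atTop (nhds (∫ x, f x ∂ν)))
    (α β : Fin n → ℝ)
    (hbox : (0 : Fin n → ℝ) ∉ Set.univ.pi fun i => Set.Icc (α i) (β i))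
    (hbdry : ν (frontier (Set.univ.pi fun i => Set.Ioc (α i) (β i))) = 0) :
    Tendsto (fun k => (1 / t k) * (μ k (Set.univ.pi fun i => Set.Ioc (α i) (β i))).toReal)
      atTop (nhds (ν (Set.univ.pi fun i => Set.Ioc (α i) (β i))).toReal) := by
  have hclosure :
      closure (univ.pi fun i => Ioc (α i) (β i)) ⊆ univ.pi fun i => Icc (α i) (β i) :=
    closure_minimal (pi_mono fun _ _ => Ioc_subset_Icc_self)
      (isClosed_set_pi fun _ _ => isClosed_Icc)
  exact tendsto_mul_measureReal_of_null_frontier (fun k => (ht k).le) hν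
    (fun f hf => hconv f hf.1 hf.2.1 hf.2.2) (MeasurableSet.univ_pi fun _ => measurableSet_Ioc)
    (fun h => hbox (hclosure h)) hbdry

/-- If ν is finite on Borel sets whose closure avoids 0, and
(1/t_k)∫ f dμ_k → ∫ f dν for every bounded continuous f vanishing near 0, then for
every half-open box (α,β] with 0 ∉ [α,β] and ν(∂(α,β]) = 0 one has
(1/t_k) μ_k((α,β]) → ν((α,β]). -/
theorem tendsto_measure_box_of_tendsto_integral {n : ℕ}
    (ν : Measure (Fin n → ℝ))
    (hν : ∀ A : Set (Fin n → ℝ), MeasurableSet A → (0 : Fin n → ℝ) ∉ closure A → ν A < ⊤)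
    (μ : ℕ → Measure (Fin n → ℝ)) (hμ : ∀ k, IsFiniteMeasure (μ k))
    (t : ℕ → ℝ) (ht : ∀ k, 0 < t k) (ht0 : Tendsto t atTop (nhds 0))
    (hconv : ∀ f : (Fin n → ℝ) → ℝ, Continuous f → (∃ C : ℝ, ∀ x, |f x| ≤ C) →
      (∃ s ∈ nhds (0 : Fin n → ℝ), ∀ x ∈ s, f x = 0) →
      Tendsto (fun k => (1 / t k) * ∫ x, f x ∂(μ k)) atTop (nhds (∫ x, f x ∂ν)))
    (α β : Fin n → ℝ)
    (hbox : (0 : Fin n → ℝ) ∉ Set.univ.pi fun i => Set.Icc (α i) (β i))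
    (hbdry : ν (frontier (Set.univ.pi fun i => Set.Ioc (α i) (β i))) = 0) :
    Tendsto (fun k => (1 / t k) * (μ k (Set.univ.pi fun i => Set.Ioc (α i) (β i))).toReal)
      atTop (nhds (ν (Set.univ.pi fun i => Set.Ioc (α i) (β i))).toReal) :=
  tendsto_measure_box_of_tendsto_integral_general ν hν μ hμ t ht hconv α β hbox hbdry
end

section
/- Let ν be a σ-finite Borel measure on ℝⁿ. Then the σ-algebra generated by the collection of half-open boxes {(α,β] ⊆ ℝⁿ : 0 ∉ [α,β] and ν(∂(α,β]) = 0} equals the Borel σ-algebra of ℝⁿ. -/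
/-!
A σ-finite measure charges at most countably many of the parallel hyperplanes `{v | v i = t}`, so
each coordinate has a countable dense set of levels whose hyperplanes are null, and boxes with
endpoints at these levels have null frontier. Such boxes generate the Borel σ-algebra. Those whose
closure contains the origin are not needed: minus the origin, such a box is a countable union of
boxes of the same kind that avoid it, and then `{0}` is the complement of a countable union of them.
-/

open MeasureTheory Set

theorem exists_countable_dense_measure_preimage_singleton_eq_zero {X : Type*}
    [MeasurableSpace X] (μ : Measure X) [SFinite μ] {f : X → ℝ} (hf : Measurable f) :
    ∃ E : Set ℝ, E.Countable ∧ Dense E ∧ ∀ t ∈ E, μ (f ⁻¹' {t}) = 0 := by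
  have hnull : Dense {t : ℝ | 0 < μ (f ⁻¹' {t})}ᶜ :=
    (Measure.countable_meas_level_set_pos hf).dense_compl ℝ
  obtain ⟨E, hE, hEc, hEd⟩ := hnull.exists_countable_dense_subset
  exact ⟨E, hEc, hEd, fun t ht => nonpos_iff_eq_zero.1 (not_lt.1 (hE ht))⟩

theorem frontier_Ioc_subset {α : Type*} [TopologicalSpace α] [LinearOrder α] [OrderTopology α]
    [DenselyOrdered α] [NoMaxOrder α] (a b : α) : frontier (Ioc a b) ⊆ {a, b} := by
  rcases lt_or_ge a b with h | h
  · exact (frontier_Ioc h).subset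
  · simp [Ioc_eq_empty_of_le h]

theorem frontier_univ_pi_subset {ι : Type*} [Finite ι] {X : ι → Type*}
    [∀ i, TopologicalSpace (X i)] (s : ∀ i, Set (X i)) :
    frontier (univ.pi s) ⊆ ⋃ i, Function.eval i ⁻¹' frontier (s i) := by
  rintro x ⟨hcl, hint⟩
  rw [closure_pi_set, mem_univ_pi] at hcl
  rw [interior_pi_set finite_univ, mem_univ_pi, not_forall] at hint
  obtain ⟨i, hi⟩ := hint
  exact mem_iUnion.2 ⟨i, hcl i, hi⟩

theorem measure_frontier_pi_Ioc_eq_zero {ι : Type*} [Finite ι] {μ : Measure (ι → ℝ)}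
    {α β : ι → ℝ} (hα : ∀ i, μ (Function.eval i ⁻¹' {α i}) = 0)
    (hβ : ∀ i, μ (Function.eval i ⁻¹' {β i}) = 0) :
    μ (frontier (univ.pi fun i => Ioc (α i) (β i))) = 0 := by
  have hsub : frontier (univ.pi fun i => Ioc (α i) (β i)) ⊆
      ⋃ i, Function.eval i ⁻¹' {α i, β i} :=
    (frontier_univ_pi_subset _).trans (iUnion_mono fun i => preimage_mono (frontier_Ioc_subset _ _))
  refine measure_mono_null hsub (measure_iUnion_null fun i => ?_)
  rw [insert_eq, preimage_union]
  exact measure_union_null (hα i) (hβ i)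

theorem Dense.isCountablySpanning_Ioc {E : Set ℝ} (hE : Dense E) :
    IsCountablySpanning {S : Set ℝ | ∃ l ∈ E, ∃ u ∈ E, l < u ∧ Ioc l u = S} := by
  choose l hlE hl using fun k : ℕ => hE.exists_between (sub_one_lt (-k : ℝ))
  choose u huE hu using fun k : ℕ => hE.exists_between (lt_add_one (k : ℝ))
  refine ⟨fun k => Ioc (l k) (u k), fun k => ⟨l k, hlE k, u k, huE k, ?_, rfl⟩,
    eq_univ_of_forall fun x => ?_⟩
  · linarith [(hl k).2, (hu k).1, k.cast_nonneg (α := ℝ)]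
  · obtain ⟨k, hk⟩ := exists_nat_gt |x|
    exact mem_iUnion.2 ⟨k, by constructor <;> linarith [abs_lt.1 hk, (hl k).2, (hu k).1]⟩

theorem borel_pi_eq_generateFrom_pi_Ioc {ι : Type*} [Finite ι] {E : ι → Set ℝ}
    (hE : ∀ i, Dense (E i)) :
    borel (ι → ℝ) = MeasurableSpace.generateFrom
      (pi univ '' pi univ fun i => {S : Set ℝ | ∃ l ∈ E i, ∃ u ∈ E i, l < u ∧ Ioc l u = S}) :=
  BorelSpace.measurable_eq.symm.trans (generateFrom_eq_pi
    (fun i => (hE i).borel_eq_generateFrom_Ioc_mem.symm.trans BorelSpace.measurable_eq.symm)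
    fun i => (hE i).isCountablySpanning_Ioc).symm

theorem exists_Ioc_subset_Ioc_zero_notMem_Icc {E : Set ℝ} (hE : Dense E) {a b x : ℝ}
    (ha : a ∈ E) (hb : b ∈ E) (hx : x ∈ Ioc a b) (hx0 : x ≠ 0) :
    ∃ a' ∈ E, ∃ b' ∈ E, 0 ∉ Icc a' b' ∧ x ∈ Ioc a' b' ∧ Ioc a' b' ⊆ Ioc a b := by
  rcases hx0.lt_or_gt with hneg | hpos
  · obtain ⟨c, hcE, hxc, hc0⟩ := hE.exists_between hneg
    have hcb : min c b ∈ E := by rcases min_choice c b with h | h <;> rw [h] <;> assumption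
    exact ⟨a, ha, min c b, hcb, fun h0 => (h0.2.trans (min_le_left c b)).not_gt hc0,
      ⟨hx.1, le_min hxc.le hx.2⟩, Ioc_subset_Ioc_right (min_le_right c b)⟩
  · obtain ⟨c, hcE, hac, hcx⟩ := hE.exists_between (max_lt hx.1 hpos)
    exact ⟨c, hcE, b, hb, fun h0 => ((le_max_right a 0).trans_lt hac).not_ge h0.1, ⟨hcx, hx.2⟩,
      Ioc_subset_Ioc_left ((le_max_left a 0).trans hac.le)⟩

section

variable {ι : Type*} {E : ι → Set ℝ}

theorem exists_pi_Ioc_subset_pi_Ioc_zero_notMem_pi_Icc (hE : ∀ i, Dense (E i)) {α β v : ι → ℝ}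
    (hα : ∀ i, α i ∈ E i) (hβ : ∀ i, β i ∈ E i) (hv : v ∈ univ.pi fun i => Ioc (α i) (β i))
    (hv0 : v ≠ 0) :
    ∃ α' β' : ι → ℝ, (∀ i, α' i ∈ E i) ∧ (∀ i, β' i ∈ E i) ∧
      (0 : ι → ℝ) ∉ univ.pi (fun i => Icc (α' i) (β' i)) ∧
      v ∈ univ.pi (fun i => Ioc (α' i) (β' i)) ∧
      (univ.pi fun i => Ioc (α' i) (β' i)) ⊆ univ.pi fun i => Ioc (α i) (β i) := by
  classical
  obtain ⟨i, hi⟩ : ∃ i, v i ≠ 0 := by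
    by_contra! h
    exact hv0 (funext h)
  obtain ⟨a, ha, b, hb, h0, hvab, hab⟩ :=
    exists_Ioc_subset_Ioc_zero_notMem_Icc (hE i) (hα i) (hβ i) (hv i trivial) hi
  refine ⟨Function.update α i a, Function.update β i b, ?_, ?_, ?_, ?_, ?_⟩
  · exact (Function.forall_update_iff α fun j x => x ∈ E j).2 ⟨ha, fun j _ => hα j⟩
  · exact (Function.forall_update_iff β fun j x => x ∈ E j).2 ⟨hb, fun j _ => hβ j⟩
  · exact fun h => h0 (by simpa using h i trivial)
  · intro j _
    rcases eq_or_ne j i with rfl | hj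
    · simpa using hvab
    · simpa [hj] using hv j trivial
  · intro w hw j _
    rcases eq_or_ne j i with rfl | hj
    · exact hab (by simpa using hw j trivial)
    · simpa [hj] using hw j trivial

variable [Finite ι] {m : MeasurableSpace (ι → ℝ)}

theorem measurableSet_pi_Ioc_diff_zero (hEc : ∀ i, (E i).Countable) (hEd : ∀ i, Dense (E i))
    (hm : ∀ α β : ι → ℝ, (∀ i, α i ∈ E i) → (∀ i, β i ∈ E i) →
      (0 : ι → ℝ) ∉ univ.pi (fun i => Icc (α i) (β i)) →
      MeasurableSet[m] (univ.pi fun i => Ioc (α i) (β i)))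
    {α β : ι → ℝ} (hα : ∀ i, α i ∈ E i) (hβ : ∀ i, β i ∈ E i) :
    MeasurableSet[m] ((univ.pi fun i => Ioc (α i) (β i)) \ {0}) := by
  set P := {p : (ι → ℝ) × (ι → ℝ) | (∀ i, p.1 i ∈ E i) ∧ (∀ i, p.2 i ∈ E i) ∧
    (0 : ι → ℝ) ∉ univ.pi (fun i => Icc (p.1 i) (p.2 i)) ∧
    (univ.pi fun i => Ioc (p.1 i) (p.2 i)) ⊆ univ.pi fun i => Ioc (α i) (β i)}
  have hP : P.Countable := by
    refine ((countable_univ_pi hEc).prod (countable_univ_pi hEc)).mono ?_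
    rintro p ⟨hp₁, hp₂, -⟩
    exact ⟨fun i _ => hp₁ i, fun i _ => hp₂ i⟩
  have hcover : (univ.pi fun i => Ioc (α i) (β i)) \ {0} =
      ⋃ p ∈ P, univ.pi fun i => Ioc (p.1 i) (p.2 i) := by
    refine Subset.antisymm ?_ (iUnion₂_subset fun p hp => subset_sdiff_singleton hp.2.2.2
      fun h0 => hp.2.2.1 (pi_mono (fun _ _ => Ioc_subset_Icc_self) h0))
    rintro v ⟨hv, hv0⟩
    obtain ⟨α', β', hα', hβ', h0, hv', hsub⟩ :=
      exists_pi_Ioc_subset_pi_Ioc_zero_notMem_pi_Icc hEd hα hβ hv hv0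
    exact mem_biUnion (show (α', β') ∈ P from ⟨hα', hβ', h0, hsub⟩) hv'
  rw [hcover]
  exact .biUnion hP fun p hp => hm p.1 p.2 hp.1 hp.2.1 hp.2.2.1

theorem borel_le_of_measurableSet_pi_Ioc (hEc : ∀ i, (E i).Countable) (hEd : ∀ i, Dense (E i))
    (hm : ∀ α β : ι → ℝ, (∀ i, α i ∈ E i) → (∀ i, β i ∈ E i) →
      (0 : ι → ℝ) ∉ univ.pi (fun i => Icc (α i) (β i)) →
      MeasurableSet[m] (univ.pi fun i => Ioc (α i) (β i))) :
    borel (ι → ℝ) ≤ m := by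
  set C : ∀ i, Set (Set ℝ) := fun i => {S | ∃ l ∈ E i, ∃ u ∈ E i, l < u ∧ Ioc l u = S}
  have hdiff : ∀ B ∈ pi univ '' pi univ C, MeasurableSet[m] (B \ {0}) := by
    rintro _ ⟨s, hs, rfl⟩
    choose α hα β hβ _ hs using fun i => hs i (mem_univ i)
    rw [show s = fun i => Ioc (α i) (β i) from funext fun i => (hs i).symm]
    exact measurableSet_pi_Ioc_diff_zero hEc hEd hm hα hβ
  have h0 : MeasurableSet[m] ({0} : Set (ι → ℝ)) := by
    obtain ⟨t, htC, ht⟩ := IsCountablySpanning.pi fun i => (hEd i).isCountablySpanning_Ioc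
    have hcompl : ({0} : Set (ι → ℝ))ᶜ = ⋃ k, t k \ {0} := by
      rw [← iUnion_sdiff, ht, compl_eq_univ_sdiff]
    refine .of_compl ?_
    rw [hcompl]
    exact .iUnion fun k => hdiff _ (htC k)
  rw [borel_pi_eq_generateFrom_pi_Ioc hEd]
  refine MeasurableSpace.generateFrom_le fun B hB => ?_
  by_cases hB0 : (0 : ι → ℝ) ∈ B
  · rw [← insert_sdiff_self_of_mem hB0, insert_eq]
    exact h0.union (hdiff B hB)
  · rw [← sdiff_singleton_eq_self hB0]
    exact hdiff B hB

end

/-- For a σ-finite Borel measure ν on ℝⁿ, the σ-algebra generated by the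
half-open boxes (α,β] with 0 ∉ [α,β] and ν(∂(α,β]) = 0 is the Borel σ-algebra. -/
theorem generateFrom_boxes_eq_borel {n : ℕ}
    (ν : Measure (Fin n → ℝ)) [SigmaFinite ν] :
    MeasurableSpace.generateFrom
        {S : Set (Fin n → ℝ) | ∃ α β : Fin n → ℝ,
          S = (Set.univ.pi fun i => Set.Ioc (α i) (β i)) ∧
          (0 : Fin n → ℝ) ∉ (Set.univ.pi fun i => Set.Icc (α i) (β i)) ∧
          ν (frontier S) = 0}
      = borel (Fin n → ℝ) := by
  refine le_antisymm (MeasurableSpace.generateFrom_le ?_) ?_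
  · rintro _ ⟨α, β, rfl, -, -⟩
    rw [← BorelSpace.measurable_eq]
    exact .univ_pi fun i => measurableSet_Ioc
  · choose E hEc hEd hE0 using fun i : Fin n =>
      exists_countable_dense_measure_preimage_singleton_eq_zero ν (measurable_pi_apply i)
    exact borel_le_of_measurableSet_pi_Ioc hEc hEd fun α β hα hβ h0 =>
      MeasurableSpace.measurableSet_generateFrom
        ⟨α, β, rfl, h0, measure_frontier_pi_Ioc_eq_zero (fun i => hE0 i _ (hα i))
          fun i => hE0 i _ (hβ i)⟩
end

section
/- Let U be a separable real Banach space and let ν be a Borel measure on U such that ∫_U ⟨u,a⟩² ν(du) < ∞ for every a ∈ U*. Then the linear map G : U* → L²(U, B(U), ν), Ga = ⟨·, a⟩, is bounded; that is, there exists a constant C ≥ 0 such that ∫_U ⟨u,a⟩² ν(du) ≤ C² ‖a‖² for all a ∈ U*. -/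
/-!
Each `a ↦ ⟨·, a⟩` lands in `L²(ν)` by hypothesis, so `G` is a linear map from the Banach space
`U*` to the Banach space `L²(ν)`. Its graph is closed: if `aₙ → a` in `U*` and `G aₙ → g` in
`L²(ν)`, a subsequence of `G aₙ` converges to `g` almost everywhere, while `⟨u, aₙ⟩ → ⟨u, a⟩`
for every `u`; hence `g = G a`. The closed graph theorem makes `G` bounded, and
`∫ ⟨u, a⟩² dν = ‖G a‖² ≤ ‖G‖² ‖a‖²`.
-/

open MeasureTheory Filter Topology
open scoped ENNReal

namespace MeasureTheory

variable {α : Type*} [MeasurableSpace α] {μ : Measure α} {p : ℝ≥0∞} [Fact (1 ≤ p)]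

theorem Lp.ae_eq_of_tendsto_of_ae_tendsto {E : Type*} [NormedAddCommGroup E]
    {f : ℕ → Lp E p μ} {g : Lp E p μ} {h : α → E} (hfg : Tendsto f atTop (𝓝 g))
    (hfh : ∀ᵐ x ∂μ, Tendsto (fun n => f n x) atTop (𝓝 (h x))) : g =ᵐ[μ] h := by
  obtain ⟨ns, hns, hg⟩ := (tendstoInMeasure_of_tendsto_Lp hfg).exists_seq_tendsto_ae
  filter_upwards [hg, hfh] with x hgx hhx
  exact tendsto_nhds_unique hgx (hhx.comp hns.tendsto_atTop)

theorem MemLp.integral_sq_eq_norm_toLp_sq {f : α → ℝ} (hf : MemLp f 2 μ) :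
    ∫ x, f x ^ 2 ∂μ = ‖hf.toLp f‖ ^ 2 := by
  rw [← real_inner_self_eq_norm_sq, L2.inner_def]
  refine integral_congr_ae ?_
  filter_upwards [hf.coeFn_toLp] with x hx
  simp only [hx, RCLike.inner_apply, conj_trivial, sq]

variable {𝕜 : Type*} [NontriviallyNormedField 𝕜]
  {E : Type*} [NormedAddCommGroup E] [NormedSpace 𝕜 E] [CompleteSpace E]

theorem Lp.continuous_linearMap_of_ae_eq {F : Type*} [NormedAddCommGroup F] [NormedSpace 𝕜 F]
    [CompleteSpace F] (L : F →ₗ[𝕜] Lp E p μ) (f : F → α → E)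
    (hf : ∀ x, Continuous fun a => f a x) (hL : ∀ a, L a =ᵐ[μ] f a) : Continuous L := by
  refine L.continuous_of_seq_closed_graph fun u a g hu hLu => ?_
  have hLu_ae : ∀ᵐ x ∂μ, Tendsto (fun n => L (u n) x) atTop (𝓝 (f a x)) := by
    filter_upwards [ae_all_iff.2 fun n => hL (u n)] with x hx
    exact (((hf x).tendsto a).comp hu).congr fun n => (hx n).symm
  exact Lp.ext ((Lp.ae_eq_of_tendsto_of_ae_tendsto hLu hLu_ae).trans (hL a).symm)

variable {U : Type*} [NormedAddCommGroup U] [NormedSpace 𝕜 U] [MeasurableSpace U]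
  {ν : Measure U} [CompleteSpace 𝕜]

def dualToLpₗ (hm : ∀ a : U →L[𝕜] 𝕜, MemLp a p ν) : (U →L[𝕜] 𝕜) →ₗ[𝕜] Lp 𝕜 p ν where
  toFun a := (hm a).toLp a
  map_add' a b := ((hm a).toLp_add (hm b)).symm
  map_smul' c a := ((hm a).toLp_const_smul c).symm

def dualToLp (hm : ∀ a : U →L[𝕜] 𝕜, MemLp a p ν) : (U →L[𝕜] 𝕜) →L[𝕜] Lp 𝕜 p ν where
  toLinearMap := dualToLpₗ hm
  cont := Lp.continuous_linearMap_of_ae_eq _ (fun a => (a : U → 𝕜))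
    (fun x => continuous_eval_const x) fun a => (hm a).coeFn_toLp

end MeasureTheory

theorem squared_pairing_integral_bounded_general
    {U : Type*} [NormedAddCommGroup U] [NormedSpace ℝ U]
    [MeasurableSpace U] [BorelSpace U]
    (ν : Measure U)
    (hint : ∀ a : U →L[ℝ] ℝ, Integrable (fun u => (a u) ^ 2) ν) :
    ∃ C : ℝ, 0 ≤ C ∧ ∀ a : U →L[ℝ] ℝ, ∫ u, (a u) ^ 2 ∂ν ≤ C ^ 2 * ‖a‖ ^ 2 := by
  have hm : ∀ a : U →L[ℝ] ℝ, MemLp a 2 ν := fun a =>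
    (memLp_two_iff_integrable_sq a.continuous.aestronglyMeasurable).2 (hint a)
  refine ⟨‖dualToLp hm‖, (dualToLp hm).opNorm_nonneg, fun a => ?_⟩
  rw [(hm a).integral_sq_eq_norm_toLp_sq, ← mul_pow]
  exact pow_le_pow_left₀ (norm_nonneg _) ((dualToLp hm).le_opNorm a) 2

/-- If ν is a Borel measure on a separable Banach space U such that
∫ ⟨u,a⟩² ν(du) < ∞ for every a ∈ U*, then the map a ↦ ⟨·,a⟩ into L²(ν) is bounded:
there is C ≥ 0 with ∫ ⟨u,a⟩² ν(du) ≤ C² ‖a‖² for all a ∈ U*. -/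
theorem squared_pairing_integral_bounded
    {U : Type*} [NormedAddCommGroup U] [NormedSpace ℝ U] [CompleteSpace U]
    [TopologicalSpace.SeparableSpace U] [MeasurableSpace U] [BorelSpace U]
    (ν : Measure U)
    (hint : ∀ a : U →L[ℝ] ℝ, Integrable (fun u => (a u) ^ 2) ν) :
    ∃ C : ℝ, 0 ≤ C ∧ ∀ a : U →L[ℝ] ℝ, ∫ u, (a u) ^ 2 ∂ν ≤ C ^ 2 * ‖a‖ ^ 2 :=
  squared_pairing_integral_bounded_general ν hint
end

section
/- Let U be a separable real Banach space and let ν be a Borel measure on U such that ∫_U ⟨u,a⟩² ν(du) < ∞ for every a ∈ U*. Then there exists a constant C ≥ 0 such that for all a, b ∈ U* the function u ↦ ⟨u,a⟩⟨u,b⟩ is ν-integrable and |∫_U ⟨u,a⟩⟨u,b⟩ ν(du)| ≤ C² ‖a‖ ‖b‖; in particular, for each fixed a ∈ U* the linear map b ↦ ∫_U ⟨u,a⟩⟨u,b⟩ ν(du) is a continuous linear functional on U*. -/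
/-! The identity `a ↦ a` maps `U*` linearly into `L²(ν)`, and its graph is closed: if `aₙ → a` in
`U*` and `aₙ → g` in `L²`, a subsequence converges to `g` a.e. while `aₙ → a` pointwise, so `g = a`
a.e. By the closed graph theorem this map is bounded, say with norm `C`, and Cauchy–Schwarz in `L²`
gives `|∫ a b dν| ≤ C² ‖a‖ ‖b‖`. -/

open MeasureTheory
open scoped ENNReal

section ClosedGraph

variable {α 𝕜 E F : Type*} [MeasurableSpace α] {μ : Measure α} [NontriviallyNormedField 𝕜]
  [NormedAddCommGroup E] [NormedSpace 𝕜 E] [CompleteSpace E]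
  [NormedAddCommGroup F] [NormedSpace 𝕜 F] [CompleteSpace F] {p : ℝ≥0∞} [Fact (1 ≤ p)]

theorem LinearMap.continuous_of_ae_eq_of_continuous_eval (T : E →ₗ[𝕜] Lp F p μ)
    (f : E → α → F) (hf : ∀ x, Continuous fun e => f e x) (hT : ∀ e, T e =ᵐ[μ] f e) :
    Continuous T := by
  refine T.continuous_of_seq_closed_graph fun s e g hs hTs => Lp.ext ?_
  obtain ⟨ns, hns, hae⟩ := (tendstoInMeasure_of_tendsto_Lp hTs).exists_seq_tendsto_ae
  have hTs_ae : ∀ᵐ x ∂μ, ∀ n, T (s n) x = f (s n) x := ae_all_iff.mpr fun n => hT (s n)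
  filter_upwards [hae, hTs_ae, hT e] with x hx hsx hex
  rw [hex]
  refine tendsto_nhds_unique (hx.congr fun k => hsx (ns k)) ?_
  exact ((hf x).tendsto e).comp (hs.comp hns.tendsto_atTop)

end ClosedGraph

namespace StrongDual

variable {𝕜 U : Type*} [NontriviallyNormedField 𝕜] [NormedAddCommGroup U] [NormedSpace 𝕜 U]
  [MeasurableSpace U] {ν : Measure U} {p : ℝ≥0∞}

noncomputable def toLpOfMemLpₗ (h : ∀ L : StrongDual 𝕜 U, MemLp L p ν) :
    StrongDual 𝕜 U →ₗ[𝕜] Lp 𝕜 p ν where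
  toFun L := (h L).toLp L
  map_add' L L' := by rw [← MemLp.toLp_add]; rfl
  map_smul' c L := by rw [RingHom.id_apply, ← MemLp.toLp_const_smul]; rfl

theorem toLpOfMemLpₗ_ae_eq (h : ∀ L : StrongDual 𝕜 U, MemLp L p ν) (L : StrongDual 𝕜 U) :
    toLpOfMemLpₗ h L =ᵐ[ν] L :=
  (h L).coeFn_toLp

noncomputable def toLpOfMemLp [CompleteSpace 𝕜] [Fact (1 ≤ p)]
    (h : ∀ L : StrongDual 𝕜 U, MemLp L p ν) :
    StrongDual 𝕜 U →L[𝕜] Lp 𝕜 p ν :=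
  ⟨toLpOfMemLpₗ h, (toLpOfMemLpₗ h).continuous_of_ae_eq_of_continuous_eval (fun L u => L u)
    (fun u => (ContinuousLinearMap.apply 𝕜 𝕜 u).continuous) (toLpOfMemLpₗ_ae_eq h)⟩

theorem toLpOfMemLp_ae_eq [CompleteSpace 𝕜] [Fact (1 ≤ p)]
    (h : ∀ L : StrongDual 𝕜 U, MemLp L p ν) (L : StrongDual 𝕜 U) : toLpOfMemLp h L =ᵐ[ν] L :=
  toLpOfMemLpₗ_ae_eq h L

end StrongDual

section L2

variable {U : Type*} [NormedAddCommGroup U] [NormedSpace ℝ U] [MeasurableSpace U]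
  {ν : Measure U}

theorem integral_mul_eq_inner_toLpOfMemLp (h : ∀ L : StrongDual ℝ U, MemLp L 2 ν)
    (a b : StrongDual ℝ U) :
    ∫ u, a u * b u ∂ν = inner ℝ (StrongDual.toLpOfMemLp h a) (StrongDual.toLpOfMemLp h b) := by
  rw [L2.inner_def]
  refine integral_congr_ae ?_
  filter_upwards [StrongDual.toLpOfMemLp_ae_eq h a, StrongDual.toLpOfMemLp_ae_eq h b]
    with u ha hb
  rw [ha, hb, real_inner_eq_re_inner, RCLike.inner_apply, conj_trivial, mul_comm]
  rfl

theorem abs_integral_mul_le_norm_toLpOfMemLp_sq (h : ∀ L : StrongDual ℝ U, MemLp L 2 ν)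
    (a b : StrongDual ℝ U) :
    |∫ u, a u * b u ∂ν| ≤ ‖StrongDual.toLpOfMemLp h‖ ^ 2 * ‖a‖ * ‖b‖ := by
  set T := StrongDual.toLpOfMemLp h
  calc |∫ u, a u * b u ∂ν| = |inner ℝ (T a) (T b)| := by
        rw [integral_mul_eq_inner_toLpOfMemLp]
    _ ≤ ‖T a‖ * ‖T b‖ := abs_real_inner_le_norm _ _
    _ ≤ (‖T‖ * ‖a‖) * (‖T‖ * ‖b‖) := by gcongr <;> exact T.le_opNorm _
    _ = ‖T‖ ^ 2 * ‖a‖ * ‖b‖ := by ring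

end L2

theorem pairing_product_integral_bounded_general
    {U : Type*} [NormedAddCommGroup U] [NormedSpace ℝ U]
    [MeasurableSpace U] [BorelSpace U]
    (ν : Measure U)
    (hint : ∀ a : U →L[ℝ] ℝ, Integrable (fun u => (a u) ^ 2) ν) :
    ∃ C : ℝ, 0 ≤ C ∧
      (∀ a b : U →L[ℝ] ℝ, Integrable (fun u => a u * b u) ν ∧
        |∫ u, a u * b u ∂ν| ≤ C ^ 2 * ‖a‖ * ‖b‖) ∧
      (∀ a : U →L[ℝ] ℝ, ∃ φ : (U →L[ℝ] ℝ) →L[ℝ] ℝ,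
        ∀ b : U →L[ℝ] ℝ, φ b = ∫ u, a u * b u ∂ν) := by
  have hmem : ∀ a : U →L[ℝ] ℝ, MemLp a 2 ν := fun a =>
    (memLp_two_iff_integrable_sq a.continuous.aestronglyMeasurable).mpr (hint a)
  set T := StrongDual.toLpOfMemLp hmem
  refine ⟨‖T‖, norm_nonneg T, fun a b => ⟨(hmem a).integrable_mul (hmem b),
    abs_integral_mul_le_norm_toLpOfMemLp_sq hmem a b⟩, fun a => ?_⟩
  refine ⟨(innerSL ℝ (T a)).comp T, fun b => ?_⟩
  rw [integral_mul_eq_inner_toLpOfMemLp hmem]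
  rfl

/-- If ν is a Borel measure on a separable Banach space U with
∫ ⟨u,a⟩² ν(du) < ∞ for all a ∈ U*, then there is C ≥ 0 such that for all a, b ∈ U*
the function u ↦ ⟨u,a⟩⟨u,b⟩ is ν-integrable with |∫ ⟨u,a⟩⟨u,b⟩ ν(du)| ≤ C² ‖a‖ ‖b‖;
in particular, for fixed a the map b ↦ ∫ ⟨u,a⟩⟨u,b⟩ ν(du) is a continuous linear
functional on U*. -/
theorem pairing_product_integral_bounded
    {U : Type*} [NormedAddCommGroup U] [NormedSpace ℝ U] [CompleteSpace U]
    [TopologicalSpace.SeparableSpace U] [MeasurableSpace U] [BorelSpace U]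
    (ν : Measure U)
    (hint : ∀ a : U →L[ℝ] ℝ, Integrable (fun u => (a u) ^ 2) ν) :
    ∃ C : ℝ, 0 ≤ C ∧
      (∀ a b : U →L[ℝ] ℝ, Integrable (fun u => a u * b u) ν ∧
        |∫ u, a u * b u ∂ν| ≤ C ^ 2 * ‖a‖ * ‖b‖) ∧
      (∀ a : U →L[ℝ] ℝ, ∃ φ : (U →L[ℝ] ℝ) →L[ℝ] ℝ,
        ∀ b : U →L[ℝ] ℝ, φ b = ∫ u, a u * b u ∂ν) :=
  pairing_product_integral_bounded_general ν hint
end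

section
/- Let U be a separable real Banach space, H a separable real Hilbert space, i : H → U a continuous linear map with Hilbert-adjoint-type dual i* : U* → H characterized by ⟨i*a, h⟩_H = ⟨i h, a⟩ for all h ∈ H, a ∈ U*. Let M : U* → L²(Ω, F, P) be a linear map on a probability space (Ω, F, P) satisfying E[(Ma)(Mb)] = ⟨i*a, i*b⟩_H for all a, b ∈ U*. Let (e_k)_{k∈ℕ} be a Hilbert (orthonormal) basis of H and (a_k)_{k∈ℕ} ⊆ U* with i* a_k = e_k for all k. Then for every a ∈ U*, the partial sums Σ_{k=1}^n ⟨i e_k, a⟩ · M(a_k) converge to M(a) in L²(Ω, F, P) as n → ∞. -/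
/-!
The random variables `M (a k)` have the same Gram matrix as the vectors `e k`, and `M b` pairs
with them as `i* b` pairs with the `e k`. Hence `(M (a k))` is orthonormal in `L²`, its Fourier
coefficients against `M b` are `⟪e k, i* b⟫ = b (i (e k))`, and by Parseval in `H` their squares
sum to `‖i* b‖² = ‖M b‖²`. Bessel's identity
`‖x - ∑_{k<n} ⟪v k, x⟫ v k‖² = ‖x‖² - ∑_{k<n} ⟪v k, x⟫²` then forces the partial sums to `M b`.
-/

open MeasureTheory Filter
open scoped RealInnerProductSpace

section Orthonormal

variable {ι F : Type*} [SeminormedAddCommGroup F] [InnerProductSpace ℝ F] {v : ι → F}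

theorem Orthonormal.norm_sub_sum_inner_smul_sq (hv : Orthonormal ℝ v) (x : F) (s : Finset ι) :
    ‖x - ∑ i ∈ s, ⟪v i, x⟫ • v i‖ ^ 2 = ‖x‖ ^ 2 - ∑ i ∈ s, ⟪v i, x⟫ ^ 2 := by
  rw [norm_sub_sq_real, ← real_inner_self_eq_norm_sq (∑ i ∈ s, _), hv.inner_sum, inner_sum]
  simp only [inner_smul_right, real_inner_comm x, conj_trivial, ← sq]
  ring

theorem Orthonormal.hasSum_inner_smul_of_hasSum_sq (hv : Orthonormal ℝ v) {x : F}
    (h : HasSum (fun i => ⟪v i, x⟫ ^ 2) (‖x‖ ^ 2)) : HasSum (fun i => ⟪v i, x⟫ • v i) x := by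
  rw [HasSum, tendsto_iff_norm_sub_tendsto_zero]
  have hsq : Tendsto (fun s : Finset ι => ‖x - ∑ i ∈ s, ⟪v i, x⟫ • v i‖ ^ 2) atTop (nhds 0) := by
    simp_rw [hv.norm_sub_sum_inner_smul_sq, ← sub_self (‖x‖ ^ 2)]
    exact h.const_sub _
  simpa [norm_sub_rev, Real.sqrt_sq (norm_nonneg _)] using hsq.sqrt

end Orthonormal

theorem Orthonormal.hasSum_inner_sq_of_dense_span {ι F : Type*} [NormedAddCommGroup F]
    [InnerProductSpace ℝ F] [CompleteSpace F] {v : ι → F} (hv : Orthonormal ℝ v)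
    (hsp : ⊤ ≤ (Submodule.span ℝ (Set.range v)).topologicalClosure) (x : F) :
    HasSum (fun i => ⟪v i, x⟫ ^ 2) (‖x‖ ^ 2) := by
  have hparseval := (HilbertBasis.mk hv hsp).hasSum_inner_mul_inner x x
  rw [HilbertBasis.coe_mk, real_inner_self_eq_norm_sq] at hparseval
  simpa only [real_inner_comm x, sq] using hparseval

namespace MeasureTheory

variable {α : Type*} [MeasurableSpace α] {μ : Measure α}

theorem MemLp.inner_toLp {f g : α → ℝ} (hf : MemLp f 2 μ) (hg : MemLp g 2 μ) :
    ⟪hf.toLp f, hg.toLp g⟫ = ∫ x, f x * g x ∂μ := by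
  rw [L2.inner_def]
  refine integral_congr_ae ?_
  filter_upwards [hf.coeFn_toLp, hg.coeFn_toLp] with x hfx hgx
  simp [hfx, hgx, mul_comm]

theorem MemLp.eLpNorm_sum_smul_sub_eq_enorm {ι 𝕜 E : Type*} [NormedField 𝕜]
    [NormedAddCommGroup E] [NormedSpace 𝕜 E] {p : ENNReal} {g : ι → α → E} {f : α → E}
    (hg : ∀ i, MemLp (g i) p μ) (hf : MemLp f p μ) (s : Finset ι) (c : ι → 𝕜) :
    eLpNorm (fun x => ∑ i ∈ s, c i • g i x - f x) p μ
      = ‖∑ i ∈ s, c i • (hg i).toLp (g i) - hf.toLp f‖ₑ := by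
  rw [Lp.enorm_def]
  refine eLpNorm_congr_ae ?_
  filter_upwards [Lp.coeFn_sub (∑ i ∈ s, c i • (hg i).toLp (g i)) (hf.toLp f),
    Lp.coeFn_fun_finsetSum s fun i => c i • (hg i).toLp (g i),
    (eventually_all_finset s).2 fun i _ => Lp.coeFn_smul (c i) ((hg i).toLp (g i)),
    (eventually_all_finset s).2 fun i _ => (hg i).coeFn_toLp, hf.coeFn_toLp]
    with x hsub hsum hsmul hgx hfx
  rw [hsub, Pi.sub_apply, hsum, hfx]
  exact congrArg (· - f x) <| Finset.sum_congr rfl fun i hi => by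
    rw [hsmul i hi, Pi.smul_apply, hgx i hi]

end MeasureTheory

theorem series_representation_L2_general
    {U H Ω : Type*} [NormedAddCommGroup U] [NormedSpace ℝ U]
    [NormedAddCommGroup H] [InnerProductSpace ℝ H] [CompleteSpace H]
    [MeasurableSpace Ω] (P : Measure Ω)
    (i : H →L[ℝ] U) (iStar : (U →L[ℝ] ℝ) → H)
    (hiStar : ∀ (a : U →L[ℝ] ℝ) (h : H), ⟪iStar a, h⟫ = a (i h))
    (M : (U →L[ℝ] ℝ) → Ω → ℝ)
    (hM2 : ∀ a : U →L[ℝ] ℝ, MemLp (M a) 2 P)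
    (hcov : ∀ a b : U →L[ℝ] ℝ, ∫ ω, M a ω * M b ω ∂P = ⟪iStar a, iStar b⟫)
    (e : ℕ → H) (he : Orthonormal ℝ e)
    (hspan : ⊤ ≤ (Submodule.span ℝ (Set.range e)).topologicalClosure)
    (a : ℕ → (U →L[ℝ] ℝ)) (ha : ∀ k, iStar (a k) = e k) :
    ∀ b : U →L[ℝ] ℝ,
      Tendsto (fun n => eLpNorm
          (fun ω => (∑ k ∈ Finset.range n, b (i (e k)) * M (a k) ω) - M b ω) 2 P)
        atTop (nhds 0) := by
  intro b
  set X : (U →L[ℝ] ℝ) → Lp ℝ 2 P := fun p => (hM2 p).toLp (M p)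
  have hX : ∀ p q, ⟪X p, X q⟫ = ⟪iStar p, iStar q⟫ := fun p q =>
    ((hM2 p).inner_toLp (hM2 q)).trans (hcov p q)
  have hXa : Orthonormal ℝ (X ∘ a) := by
    classical
    simpa [orthonormal_iff_ite, hX, ha] using he
  have hXab : ∀ k, ⟪X (a k), X b⟫ = b (i (e k)) := fun k => by
    rw [hX, ha, real_inner_comm, hiStar]
  have hparseval : HasSum (fun k => ⟪X (a k), X b⟫ ^ 2) (‖X b‖ ^ 2) := by
    rw [← real_inner_self_eq_norm_sq, hX, real_inner_self_eq_norm_sq]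
    simpa only [hX, ha] using he.hasSum_inner_sq_of_dense_span hspan (iStar b)
  have hconv := (hXa.hasSum_inner_smul_of_hasSum_sq hparseval).tendsto_sum_nat
  simp only [Function.comp_apply, hXab] at hconv
  simp_rw [← smul_eq_mul, MemLp.eLpNorm_sum_smul_sub_eq_enorm (fun k => hM2 (a k)) (hM2 b)]
  simpa using (tendsto_sub_nhds_zero_iff.2 hconv).enorm

/-- Let i : H → U with dual i* : U* → H (⟪i*a, h⟫ = ⟨i h, a⟩), and let
M : U* → L²(P) be linear with E[(Ma)(Mb)] = ⟪i*a, i*b⟫. If (e_k) is an orthonormal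
basis of H and i* a_k = e_k, then for every a ∈ U* the partial sums
Σ_{k<n} ⟨i e_k, a⟩ M(a_k) converge to M(a) in L². -/
theorem series_representation_L2
    {U H Ω : Type*} [NormedAddCommGroup U] [NormedSpace ℝ U] [CompleteSpace U]
    [TopologicalSpace.SeparableSpace U]
    [NormedAddCommGroup H] [InnerProductSpace ℝ H] [CompleteSpace H]
    [TopologicalSpace.SeparableSpace H]
    [MeasurableSpace Ω] (P : Measure Ω) [IsProbabilityMeasure P]
    (i : H →L[ℝ] U) (iStar : (U →L[ℝ] ℝ) → H)
    (hiStar : ∀ (a : U →L[ℝ] ℝ) (h : H), ⟪iStar a, h⟫ = a (i h))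
    (M : (U →L[ℝ] ℝ) → Ω → ℝ)
    (hM2 : ∀ a : U →L[ℝ] ℝ, MemLp (M a) 2 P)
    (hMlin : ∀ (a b : U →L[ℝ] ℝ) (c : ℝ),
      ∀ᵐ ω ∂P, M (c • a + b) ω = c * M a ω + M b ω)
    (hcov : ∀ a b : U →L[ℝ] ℝ, ∫ ω, M a ω * M b ω ∂P = ⟪iStar a, iStar b⟫)
    (e : ℕ → H) (he : Orthonormal ℝ e)
    (hspan : ⊤ ≤ (Submodule.span ℝ (Set.range e)).topologicalClosure)
    (a : ℕ → (U →L[ℝ] ℝ)) (ha : ∀ k, iStar (a k) = e k) :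
    ∀ b : U →L[ℝ] ℝ,
      Tendsto (fun n => eLpNorm
          (fun ω => (∑ k ∈ Finset.range n, b (i (e k)) * M (a k) ω) - M b ω) 2 P)
        atTop (nhds 0) :=
  series_representation_L2_general P i iStar hiStar M hM2 hcov e he hspan a ha
end

section
/- Let E be a real vector space and (Ω, F, P) a probability space. Suppose that for each a ∈ E we are given σ_a ≥ 0 and a real random variable W_a with E[W_a] = 0 and E[W_a²] = 1, such that for all a, b ∈ E and β ∈ ℝ: σ_{a+b} W_{a+b} = σ_a W_a + σ_b W_b almost surely, and σ_{βa} W_{βa} = β σ_a W_a almost surely. Then the function s : E → ℝ, s(a) := σ_a², is a quadratic form: s(βa) = β² s(a) for all β ∈ ℝ, a ∈ E, and the map Q : E × E → ℝ, Q(a,b) := s(a+b) − s(a) − s(b), is a symmetric bilinear form. -/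
/-!
The family `a ↦ σ_a W_a` is a.e. linear in `a`, so it defines a linear map `T : E → L²(P)`, and
`σ_a² = σ_a² E[W_a²] = ‖T a‖²`. Hence `s` is the pullback along `T` of the quadratic form
`x ↦ ⟪x, x⟫` of `L²(P)`, and its polar form is the symmetric bilinear form `2 ⟪T a, T b⟫`.
-/

open MeasureTheory

namespace MeasureTheory

variable {Ω F : Type*} [MeasurableSpace Ω] {P : Measure Ω} {p : ENNReal}

def MemLp.linearMapToLp {𝕜 E : Type*} [NormedRing 𝕜] [AddCommGroup E] [Module 𝕜 E]
    [NormedAddCommGroup F] [Module 𝕜 F] [IsBoundedSMul 𝕜 F]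
    (X : E → Ω → F) (hX : ∀ a, MemLp (X a) p P)
    (hadd : ∀ a b, X (a + b) =ᵐ[P] X a + X b) (hsmul : ∀ (c : 𝕜) a, X (c • a) =ᵐ[P] c • X a) :
    E →ₗ[𝕜] Lp F p P where
  toFun a := (hX a).toLp (X a)
  map_add' a b := by
    rw [← MemLp.toLp_add]
    exact MemLp.toLp_congr _ _ (hadd a b)
  map_smul' c a := by
    rw [RingHom.id_apply, ← MemLp.toLp_const_smul]
    exact MemLp.toLp_congr _ _ (hsmul c a)

theorem MemLp.real_inner_toLp {f g : Ω → ℝ} (hf : MemLp f 2 P) (hg : MemLp g 2 P) :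
    inner ℝ (hf.toLp f) (hg.toLp g) = ∫ ω, f ω * g ω ∂P := by
  rw [L2.inner_def]
  refine integral_congr_ae ?_
  filter_upwards [hf.coeFn_toLp, hg.coeFn_toLp] with ω hfω hgω
  rw [hfω, hgω, real_inner_eq_re_inner]
  simp [mul_comm]

end MeasureTheory

theorem gaussian_part_quadratic_form_general
    {E Ω : Type*} [AddCommGroup E] [Module ℝ E]
    [MeasurableSpace Ω] (P : Measure Ω)
    (σ : E → ℝ)
    (W : E → Ω → ℝ)
    (hW2 : ∀ a, MemLp (W a) 2 P)
    (hvar : ∀ a, ∫ ω, (W a ω) ^ 2 ∂P = 1)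
    (hadd : ∀ a b : E,
      ∀ᵐ ω ∂P, σ (a + b) * W (a + b) ω = σ a * W a ω + σ b * W b ω)
    (hsmul : ∀ (β : ℝ) (a : E),
      ∀ᵐ ω ∂P, σ (β • a) * W (β • a) ω = β * (σ a * W a ω)) :
    (∀ (β : ℝ) (a : E), σ (β • a) ^ 2 = β ^ 2 * σ a ^ 2)
      ∧ (∀ a b : E,
          σ (a + b) ^ 2 - σ a ^ 2 - σ b ^ 2 = σ (b + a) ^ 2 - σ b ^ 2 - σ a ^ 2)
      ∧ (∀ a a' b : E,
          σ (a + a' + b) ^ 2 - σ (a + a') ^ 2 - σ b ^ 2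
            = (σ (a + b) ^ 2 - σ a ^ 2 - σ b ^ 2)
              + (σ (a' + b) ^ 2 - σ a' ^ 2 - σ b ^ 2))
      ∧ (∀ (β : ℝ) (a b : E),
          σ (β • a + b) ^ 2 - σ (β • a) ^ 2 - σ b ^ 2
            = β * (σ (a + b) ^ 2 - σ a ^ 2 - σ b ^ 2)) := by
  have hX : ∀ a, MemLp (fun ω => σ a * W a ω) 2 P := fun a => (hW2 a).const_mul (σ a)
  let T := MemLp.linearMapToLp _ hX hadd hsmul
  let q : QuadraticForm ℝ E := LinearMap.BilinMap.toQuadraticMap ((innerₗ (Lp ℝ 2 P)).compl₁₂ T T)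
  have hq : ∀ a, σ a ^ 2 = q a := fun a => by
    change _ = inner ℝ ((hX a).toLp _) ((hX a).toLp _)
    rw [MemLp.real_inner_toLp]
    simp_rw [mul_mul_mul_comm, ← sq]
    rw [integral_const_mul, hvar, mul_one]
  simp only [hq]
  -- each remaining identity is one about `QuadraticMap.polar q a b = q (a + b) - q a - q b`
  refine ⟨fun β a => ?_, QuadraticMap.polar_comm q, q.polar_add_left, q.polar_smul_left⟩
  rw [q.map_smul, smul_eq_mul, sq]

/-- If σ_a W_a depends additively and ℝ-homogeneously (almost surely) on
a ∈ E, where W_a are centred with unit second moment, then s(a) := σ_a² is a quadratic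
form: s(βa) = β²s(a), and Q(a,b) := s(a+b) − s(a) − s(b) is a symmetric bilinear form. -/
theorem gaussian_part_quadratic_form
    {E Ω : Type*} [AddCommGroup E] [Module ℝ E]
    [MeasurableSpace Ω] (P : Measure Ω) [IsProbabilityMeasure P]
    (σ : E → ℝ) (hσ : ∀ a, 0 ≤ σ a)
    (W : E → Ω → ℝ)
    (hW2 : ∀ a, MemLp (W a) 2 P)
    (hmean : ∀ a, ∫ ω, W a ω ∂P = 0)
    (hvar : ∀ a, ∫ ω, (W a ω) ^ 2 ∂P = 1)
    (hadd : ∀ a b : E,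
      ∀ᵐ ω ∂P, σ (a + b) * W (a + b) ω = σ a * W a ω + σ b * W b ω)
    (hsmul : ∀ (β : ℝ) (a : E),
      ∀ᵐ ω ∂P, σ (β • a) * W (β • a) ω = β * (σ a * W a ω)) :
    (∀ (β : ℝ) (a : E), σ (β • a) ^ 2 = β ^ 2 * σ a ^ 2)
      ∧ (∀ a b : E,
          σ (a + b) ^ 2 - σ a ^ 2 - σ b ^ 2 = σ (b + a) ^ 2 - σ b ^ 2 - σ a ^ 2)
      ∧ (∀ a a' b : E,
          σ (a + a' + b) ^ 2 - σ (a + a') ^ 2 - σ b ^ 2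
            = (σ (a + b) ^ 2 - σ a ^ 2 - σ b ^ 2)
              + (σ (a' + b) ^ 2 - σ a' ^ 2 - σ b ^ 2))
      ∧ (∀ (β : ℝ) (a b : E),
          σ (β • a + b) ^ 2 - σ (β • a) ^ 2 - σ b ^ 2
            = β * (σ (a + b) ^ 2 - σ a ^ 2 - σ b ^ 2)) :=
  gaussian_part_quadratic_form_general P σ W hW2 hvar hadd hsmul
end
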